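/- arXiv:2605.24427 — 2 statements merged into one kernel-verified Lean document; each statement's English description precedes it below -/
import Mathlib

section
/- Let A be a C*-algebra and let D be a closed Jordan subalgebra of A. Then for x, y ∈ D, the following are equivalent: (i) x ∘ (y ∘ z) = y ∘ (x ∘ z) for all z ∈ D (x and y operator commute in D); (ii) x*y = y*x in A. -/
/-!
Expanding the Jordan products gives `4 (x ∘ (y ∘ z) - y ∘ (x ∘ z)) = [[x, y], z]`, so `x` and `y`
operator commute in `D` exactly when `c = [x, y]` commutes with every element of `D`. In that case
`c` commutes with `x` and `y`, hence `(ad x)^m (y^m) = m! c^m` and, for `m ≥ 1`,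
`m! ‖c^m‖ ≤ (2 ‖x‖ ‖y‖)^m` (Kleinecke–Shirokov). As `c` is skew-adjoint, the C*-identity gives
`‖c^(2^n)‖ = ‖c‖^(2^n)`, and the factorial growth forces `c = 0`.
-/

/-- The Jordan product `a ∘ b = ½(ab + ba)`. -/
noncomputable def jordanMul {A : Type*} [Ring A] [Module ℝ A] (a b : A) : A :=
  (2 : ℝ)⁻¹ • (a * b + b * a)

open Filter
open scoped Nat

section Jordan

variable {A : Type*} [Ring A] [Module ℝ A] [IsScalarTower ℝ A A] [SMulCommClass ℝ A A]

theorem jordanMul_jordanMul_sub_jordanMul_jordanMul (x y z : A) :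
    jordanMul x (jordanMul y z) - jordanMul y (jordanMul x z) =
      (4 : ℝ)⁻¹ • ((x * y - y * x) * z - z * (x * y - y * x)) := by
  simp only [jordanMul, mul_smul_comm, smul_mul_assoc, smul_smul, ← smul_add, ← smul_sub]
  rw [show (2 : ℝ)⁻¹ * 2⁻¹ = 4⁻¹ by norm_num]
  congr 1
  noncomm_ring

theorem jordanMul_jordanMul_eq_iff_commute (x y z : A) :
    jordanMul x (jordanMul y z) = jordanMul y (jordanMul x z) ↔
      Commute (x * y - y * x) z := by
  rw [← sub_eq_zero, jordanMul_jordanMul_sub_jordanMul_jordanMul,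
    (isUnit_iff_ne_zero.mpr (by norm_num : (4 : ℝ)⁻¹ ≠ 0)).smul_eq_zero, sub_eq_zero]
  rfl

end Jordan

section Commutator

variable {A : Type*} [Ring A] {x y : A}

theorem mul_pow_succ_sub_pow_succ_mul (hy : Commute y (x * y - y * x)) (k : ℕ) :
    x * y ^ (k + 1) - y ^ (k + 1) * x = (k + 1) • ((x * y - y * x) * y ^ k) := by
  induction k with
  | zero => simp
  | succ k ih =>
    calc x * y ^ (k + 1 + 1) - y ^ (k + 1 + 1) * x
        = (x * y ^ (k + 1) - y ^ (k + 1) * x) * y + y ^ (k + 1) * (x * y - y * x) := by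
          rw [pow_succ _ (k + 1)]; noncomm_ring
      _ = (k + 1 + 1) • ((x * y - y * x) * y ^ (k + 1)) := by
          rw [ih, (hy.pow_left (k + 1)).eq, smul_mul_assoc, mul_assoc, ← pow_succ]
          exact (succ_nsmul _ _).symm

theorem iterate_commutator_pow_add (hx : Commute x (x * y - y * x))
    (hy : Commute y (x * y - y * x)) (j k : ℕ) :
    (fun u => x * u - u * x)^[j] (y ^ (j + k)) =
      (j + k).descFactorial j • ((x * y - y * x) ^ j * y ^ k) := by
  induction j generalizing k with
  | zero => simp
  | succ j ih =>
    have hjk : j + 1 + k = j + (k + 1) := by ring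
    rw [Function.iterate_succ_apply', hjk, ih (k + 1), Nat.descFactorial_succ,
      show j + (k + 1) - j = k + 1 by omega, mul_nsmul, mul_smul_comm, smul_mul_assoc,
      ← smul_sub, ← mul_assoc, (hx.pow_right j).eq, mul_assoc, mul_assoc, ← mul_sub,
      mul_pow_succ_sub_pow_succ_mul hy, mul_smul_comm, ← mul_assoc, ← pow_succ]

theorem iterate_commutator_pow_self (hx : Commute x (x * y - y * x))
    (hy : Commute y (x * y - y * x)) (m : ℕ) :
    (fun u => x * u - u * x)^[m] (y ^ m) = m ! • (x * y - y * x) ^ m := by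
  simpa [Nat.descFactorial_self] using iterate_commutator_pow_add hx hy m 0

end Commutator

theorem norm_iterate_le_of_norm_le {E : Type*} [Norm E] {f : E → E} {C : ℝ} (hC : 0 ≤ C)
    (hf : ∀ u, ‖f u‖ ≤ C * ‖u‖) (n : ℕ) (u : E) : ‖f^[n] u‖ ≤ C ^ n * ‖u‖ := by
  induction n with
  | zero => simp
  | succ n ih =>
    calc ‖f^[n + 1] u‖ = ‖f (f^[n] u)‖ := by rw [Function.iterate_succ_apply']
      _ ≤ C * (C ^ n * ‖u‖) := (hf _).trans (mul_le_mul_of_nonneg_left ih hC)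
      _ = C ^ (n + 1) * ‖u‖ := by ring

section NormedRing

variable {A : Type*} [NormedRing A] {x y : A}

theorem norm_mul_sub_mul_le (a b : A) : ‖a * b - b * a‖ ≤ 2 * ‖a‖ * ‖b‖ :=
  calc ‖a * b - b * a‖ ≤ ‖a‖ * ‖b‖ + ‖b‖ * ‖a‖ :=
        (norm_sub_le _ _).trans (add_le_add (norm_mul_le _ _) (norm_mul_le _ _))
    _ = 2 * ‖a‖ * ‖b‖ := by ring

theorem factorial_mul_norm_commutator_pow_le [NormedSpace ℝ A] (hx : Commute x (x * y - y * x))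
    (hy : Commute y (x * y - y * x)) (m : ℕ) :
    m ! * ‖(x * y - y * x) ^ m‖ ≤ (2 * ‖x‖) ^ m * ‖y ^ m‖ :=
  calc m ! * ‖(x * y - y * x) ^ m‖ = ‖(fun u => x * u - u * x)^[m] (y ^ m)‖ := by
        rw [iterate_commutator_pow_self hx hy, RCLike.norm_nsmul ℝ, nsmul_eq_mul]
    _ ≤ (2 * ‖x‖) ^ m * ‖y ^ m‖ :=
        norm_iterate_le_of_norm_le (by positivity) (norm_mul_sub_mul_le x) m _

end NormedRing

theorem eq_zero_of_frequently_factorial_mul_pow_le {a K : ℝ} (ha : 0 ≤ a)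
    (h : ∃ᶠ m in atTop, m ! * a ^ m ≤ K ^ m) : a = 0 := by
  by_contra ha0
  have hpos : 0 < a := ha.lt_of_ne' ha0
  have hsmall : ∀ᶠ m in atTop, (K / a) ^ m / m ! < 1 :=
    (FloorSemiring.tendsto_pow_div_factorial_atTop (K / a)).eventually_lt_const one_pos
  obtain ⟨m, hle, hlt⟩ := (h.and_eventually hsmall).exists
  rw [div_pow, div_div, div_lt_one (by positivity)] at hlt
  linarith

theorem norm_pow_two_pow_of_star_eq_neg {E : Type*} [NormedRing E] [StarRing E] [CStarRing E]
    {c : E} (hc : star c = -c) (n : ℕ) : ‖c ^ 2 ^ n‖ = ‖c‖ ^ 2 ^ n := by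
  cases n with
  | zero => simp
  | succ n =>
    have hsa : IsSelfAdjoint (c ^ 2) := by rw [IsSelfAdjoint, star_pow, hc, neg_sq]
    have hsq : ‖c ^ 2‖ = ‖c‖ ^ 2 := by
      rw [sq, sq, ← norm_neg, ← neg_mul, ← hc, CStarRing.norm_star_mul_self]
    rw [pow_succ', pow_mul, hsa.norm_pow_two_pow, hsq, ← pow_mul]

theorem IsSelfAdjoint.commute_of_commute_commutator {A : Type*} [NormedRing A] [StarRing A]
    [CStarRing A] [NormedSpace ℝ A] {x y : A} (hx : IsSelfAdjoint x) (hy : IsSelfAdjoint y)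
    (hxc : Commute x (x * y - y * x)) (hyc : Commute y (x * y - y * x)) : Commute x y := by
  have hc : star (x * y - y * x) = -(x * y - y * x) := by
    rw [star_sub, star_mul, star_mul, hx.star_eq, hy.star_eq, neg_sub]
  have hbound : ∀ n : ℕ, (2 ^ n) ! * ‖x * y - y * x‖ ^ 2 ^ n ≤ (2 * ‖x‖ * ‖y‖) ^ 2 ^ n :=
    fun n => calc
      (2 ^ n) ! * ‖x * y - y * x‖ ^ 2 ^ n = (2 ^ n) ! * ‖(x * y - y * x) ^ 2 ^ n‖ := by
        rw [norm_pow_two_pow_of_star_eq_neg hc]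
      _ ≤ (2 * ‖x‖) ^ 2 ^ n * ‖y ^ 2 ^ n‖ := factorial_mul_norm_commutator_pow_le hxc hyc _
      _ ≤ (2 * ‖x‖) ^ 2 ^ n * ‖y‖ ^ 2 ^ n := by gcongr; exact norm_pow_le' y (by positivity)
      _ = (2 * ‖x‖ * ‖y‖) ^ 2 ^ n := by ring
  have hnorm : ‖x * y - y * x‖ = 0 := eq_zero_of_frequently_factorial_mul_pow_le (norm_nonneg _)
    ((tendsto_pow_atTop_atTop_of_one_lt one_lt_two).frequently (Frequently.of_forall hbound))
  exact sub_eq_zero.mp (norm_eq_zero.mp hnorm)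

theorem operatorCommute_iff_commute_general
    {A : Type*} [NormedRing A] [StarRing A] [CStarRing A]
    [NormedAlgebra ℂ A]
    (D : Set A)
    (hD_sa : ∀ a ∈ D, IsSelfAdjoint a)
    (x y : A) (hx : x ∈ D) (hy : y ∈ D) :
    (∀ z ∈ D, jordanMul x (jordanMul y z) = jordanMul y (jordanMul x z)) ↔
      x * y = y * x := by
  simp only [jordanMul_jordanMul_eq_iff_commute]
  refine ⟨fun h => ?_, fun hxy z _ => ?_⟩
  · exact (hD_sa x hx).commute_of_commute_commutator (hD_sa y hy) (h x hx).symm (h y hy).symm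
  · rw [hxy, sub_self]
    exact Commute.zero_left z

/-- Hanche-Olsen's lemma: in a closed Jordan subalgebra `D` of a C*-algebra `A`, two
elements `x, y ∈ D` operator commute in `D` if and only if they commute in `A`. -/
theorem operatorCommute_iff_commute
    {A : Type*} [NormedRing A] [StarRing A] [CStarRing A] [CompleteSpace A]
    [NormedAlgebra ℂ A] [StarModule ℂ A]
    (D : Set A)
    (hD_sa : ∀ a ∈ D, IsSelfAdjoint a)
    (hD_closed : IsClosed D)
    (hD_zero : (0 : A) ∈ D)
    (hD_add : ∀ a ∈ D, ∀ b ∈ D, a + b ∈ D)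
    (hD_smul : ∀ r : ℝ, ∀ a ∈ D, r • a ∈ D)
    (hD_jordan : ∀ a ∈ D, ∀ b ∈ D, jordanMul a b ∈ D)
    (x y : A) (hx : x ∈ D) (hy : y ∈ D) :
    (∀ z ∈ D, jordanMul x (jordanMul y z) = jordanMul y (jordanMul x z)) ↔
      x * y = y * x :=
  operatorCommute_iff_commute_general D hD_sa x y hx hy
end

section
/- Let A be a C*-algebra and S a nonempty set of self-adjoint elements of A. For self-adjoint x, y ∈ A, write JB(x,y) for the closed Jordan subalgebra of A generated by {x, y}. Suppose that for all s, s′ ∈ S one has s ∘ (s′ ∘ z) = s′ ∘ (s ∘ z) for every z ∈ JB(s,s′). Then s·s′ = s′·s in A for all s, s′ ∈ S, and moreover any two elements x, y of the closed Jordan subalgebra of A generated by S satisfy x·y = y·x in A; in particular that subalgebra is associative and commutative under the Jordan product. -/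
/-- `D` is a closed Jordan subalgebra of `A`: a norm-closed real-linear subspace of the
self-adjoint part of `A` that is closed under the Jordan product. -/
def IsClosedJordanSubalgebra {A : Type*} [NormedRing A] [StarRing A] [Module ℝ A]
    (D : Set A) : Prop :=
  IsClosed D ∧ (∀ a ∈ D, IsSelfAdjoint a) ∧ (0 : A) ∈ D ∧
    (∀ a ∈ D, ∀ b ∈ D, a + b ∈ D) ∧ (∀ r : ℝ, ∀ a ∈ D, r • a ∈ D) ∧
    (∀ a ∈ D, ∀ b ∈ D, jordanMul a b ∈ D)

/-- The closed Jordan subalgebra of `A` generated by a set `T` of self-adjoint elements: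
the smallest closed Jordan subalgebra containing `T`. -/
def jordanClosure {A : Type*} [NormedRing A] [StarRing A] [Module ℝ A]
    (T : Set A) : Set A :=
  ⋂₀ {D : Set A | IsClosedJordanSubalgebra D ∧ T ⊆ D}

/-!
Expanding the Jordan products gives `4 (s ∘ (t ∘ z) - t ∘ (s ∘ z)) = ⁅⁅s, t⁆, z⁆`, so operator
commutation of `s` and `t` on `z = s` and `z = t` says that `c = ⁅s, t⁆` commutes with `s` and `t`.
Then `ad_s^k (t^k) = k! c^k`, hence `k! ‖c^k‖ ≤ (2 ‖s‖ ‖t‖)^k` (Kleinecke–Shirokov). As `c` is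
skew-adjoint, the C*-identity gives `‖c^(2^m)‖ = ‖c‖^(2^m)`, which is incompatible with this bound
unless `c = 0`. Finally, the self-adjoint elements commuting with a given set form a closed Jordan
subalgebra; applied twice, this spreads commutativity from `S` to its closed Jordan hull.
-/

section Ring

variable {A : Type*} [Ring A]

theorem lie_pow_succ_of_commute {s t : A} (h : Commute ⁅s, t⁆ t) (n : ℕ) :
    ⁅s, t ^ (n + 1)⁆ = (n + 1) • (⁅s, t⁆ * t ^ n) := by
  induction n with
  | zero => simp
  | succ n ih =>
    have leibniz : ⁅s, t ^ (n + 2)⁆ = ⁅s, t⁆ * t ^ (n + 1) + t * ⁅s, t ^ (n + 1)⁆ := by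
      simp only [Ring.lie_def, pow_succ' t (n + 1)]
      noncomm_ring
    rw [leibniz, ih, mul_smul_comm, ← mul_assoc, ← h.eq, mul_assoc, ← pow_succ', ← succ_nsmul']

theorem iterate_lie_mul_left {s c : A} (h : Commute c s) (k : ℕ) (x : A) :
    (fun y => ⁅s, y⁆)^[k] (c * x) = c * (fun y => ⁅s, y⁆)^[k] x := by
  have : Function.Commute (fun y => ⁅s, y⁆) (fun y : A => c * y) := fun y => by
    simp only [Ring.lie_def, mul_sub, ← mul_assoc, h.eq]
  exact this.iterate_left k x

theorem iterate_lie_nsmul (s : A) (n k : ℕ) (x : A) :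
    (fun y => ⁅s, y⁆)^[k] (n • x) = n • (fun y => ⁅s, y⁆)^[k] x := by
  have : Function.Commute (fun y => ⁅s, y⁆) (fun y : A => n • y) := fun y => by
    simp only [Ring.lie_def, mul_smul_comm, smul_mul_assoc, smul_sub]
  exact this.iterate_left k x

theorem iterate_lie_pow_add {s t : A} (hct : Commute ⁅s, t⁆ t) (hcs : Commute ⁅s, t⁆ s)
    (k n : ℕ) :
    (fun y => ⁅s, y⁆)^[k] (t ^ (n + k)) = (n + k).descFactorial k • (⁅s, t⁆ ^ k * t ^ n) := by
  induction k generalizing n with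
  | zero => simp
  | succ k ih =>
    rw [Function.iterate_succ_apply, ← add_assoc, lie_pow_succ_of_commute hct,
      iterate_lie_nsmul, iterate_lie_mul_left hcs, ih, Nat.succ_descFactorial_succ, mul_smul_comm,
      smul_smul, ← mul_assoc, ← pow_succ']

theorem iterate_lie_pow_self {s t : A} (hct : Commute ⁅s, t⁆ t) (hcs : Commute ⁅s, t⁆ s)
    (k : ℕ) : (fun y => ⁅s, y⁆)^[k] (t ^ k) = k.factorial • ⁅s, t⁆ ^ k := by
  simpa [Nat.descFactorial_self] using iterate_lie_pow_add hct hcs k 0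

end Ring

section NormedRing

variable {A : Type*} [NormedRing A]

theorem norm_lie_le (s x : A) : ‖⁅s, x⁆‖ ≤ 2 * ‖s‖ * ‖x‖ :=
  calc ‖⁅s, x⁆‖ ≤ ‖s * x‖ + ‖x * s‖ := by rw [Ring.lie_def]; exact norm_sub_le _ _
    _ ≤ ‖s‖ * ‖x‖ + ‖x‖ * ‖s‖ := add_le_add (norm_mul_le _ _) (norm_mul_le _ _)
    _ = 2 * ‖s‖ * ‖x‖ := by ring

theorem norm_iterate_lie_le (s : A) (k : ℕ) (x : A) :
    ‖(fun y => ⁅s, y⁆)^[k] x‖ ≤ (2 * ‖s‖) ^ k * ‖x‖ := by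
  induction k generalizing x with
  | zero => simp
  | succ k ih =>
    rw [Function.iterate_succ_apply]
    calc _ ≤ (2 * ‖s‖) ^ k * ‖⁅s, x⁆‖ := ih _
      _ ≤ (2 * ‖s‖) ^ k * (2 * ‖s‖ * ‖x‖) := by gcongr; exact norm_lie_le s x
      _ = (2 * ‖s‖) ^ (k + 1) * ‖x‖ := by ring

theorem factorial_mul_norm_lie_pow_le [NormedSpace ℝ A] {s t : A}
    (hct : Commute ⁅s, t⁆ t) (hcs : Commute ⁅s, t⁆ s) {k : ℕ} (hk : k ≠ 0) :
    k.factorial * ‖⁅s, t⁆ ^ k‖ ≤ (2 * ‖s‖ * ‖t‖) ^ k :=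
  calc k.factorial * ‖⁅s, t⁆ ^ k‖ = ‖(fun y => ⁅s, y⁆)^[k] (t ^ k)‖ := by
        rw [iterate_lie_pow_self hct hcs, RCLike.norm_nsmul ℝ, nsmul_eq_mul]
    _ ≤ (2 * ‖s‖) ^ k * ‖t ^ k‖ := norm_iterate_lie_le s k _
    _ ≤ (2 * ‖s‖) ^ k * ‖t‖ ^ k := by gcongr; exact norm_pow_le' t (Nat.pos_of_ne_zero hk)
    _ = (2 * ‖s‖ * ‖t‖) ^ k := by ring

end NormedRing

theorem eq_zero_of_forall_factorial_mul_pow_two_pow_le {x M : ℝ} (hx : 0 ≤ x)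
    (h : ∀ m : ℕ, (2 ^ m).factorial * x ^ 2 ^ m ≤ M ^ 2 ^ m) : x = 0 := by
  by_contra hne
  have hpos : 0 < x := hx.lt_of_ne' hne
  have tendsto_zero : Filter.Tendsto (fun m : ℕ => (M / x) ^ 2 ^ m / (2 ^ m).factorial)
      Filter.atTop (nhds 0) :=
    (FloorSemiring.tendsto_pow_div_factorial_atTop (M / x)).comp
      (tendsto_pow_atTop_atTop_of_one_lt one_lt_two)
  obtain ⟨m, hm⟩ := (tendsto_zero.eventually_lt_const one_pos).exists
  refine hm.not_ge ?_
  rw [le_div_iff₀ (by positivity), one_mul, div_pow, le_div_iff₀ (by positivity)]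
  linarith [h m]

section CStarRing

variable {A : Type*} [NormedRing A] [StarRing A] [CStarRing A]

theorem norm_pow_two_pow_of_star_eq_neg_s8 {c : A} (hc : star c = -c) (m : ℕ) :
    ‖c ^ 2 ^ m‖ = ‖c‖ ^ 2 ^ m := by
  cases m with
  | zero => simp
  | succ m =>
    have hsq : IsSelfAdjoint (c ^ 2) := by rw [IsSelfAdjoint, star_pow, hc, neg_sq]
    have norm_sq : ‖c ^ 2‖ = ‖c‖ ^ 2 := by
      rw [sq, sq, ← CStarRing.norm_star_mul_self, hc, neg_mul, norm_neg]
    rw [pow_succ', pow_mul, hsq.norm_pow_two_pow, norm_sq, ← pow_mul]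

theorem commute_of_commute_lie [NormedSpace ℝ A] {s t : A} (hs : IsSelfAdjoint s)
    (ht : IsSelfAdjoint t) (hct : Commute ⁅s, t⁆ t) (hcs : Commute ⁅s, t⁆ s) : Commute s t := by
  have skew : star ⁅s, t⁆ = -⁅s, t⁆ := by
    rw [Ring.lie_def, star_sub, star_mul, star_mul, hs.star_eq, ht.star_eq, neg_sub]
  have bound (m : ℕ) : (2 ^ m).factorial * ‖⁅s, t⁆‖ ^ 2 ^ m ≤ (2 * ‖s‖ * ‖t‖) ^ 2 ^ m := by
    rw [← norm_pow_two_pow_of_star_eq_neg_s8 skew]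
    exact factorial_mul_norm_lie_pow_le hct hcs (pow_ne_zero m two_ne_zero)
  have norm_zero := eq_zero_of_forall_factorial_mul_pow_two_pow_le (norm_nonneg _) bound
  rwa [norm_eq_zero, Ring.lie_def, sub_eq_zero] at norm_zero

end CStarRing

section Jordan

variable {A : Type*}

theorem four_smul_sub_jordanMul_jordanMul [Ring A] [Algebra ℝ A] (s t z : A) :
    (4 : ℝ) • (jordanMul s (jordanMul t z) - jordanMul t (jordanMul s z)) = ⁅⁅s, t⁆, z⁆ := by
  simp only [jordanMul, Ring.lie_def, smul_sub, smul_add, smul_smul, mul_add, add_mul,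
    mul_smul_comm, smul_mul_assoc, mul_sub, sub_mul]
  norm_num
  noncomm_ring

theorem jordanMul_jordanMul_comm_iff [Ring A] [Algebra ℝ A] {s t z : A} :
    jordanMul s (jordanMul t z) = jordanMul t (jordanMul s z) ↔ Commute ⁅s, t⁆ z := by
  rw [commute_iff_lie_eq, ← four_smul_sub_jordanMul_jordanMul,
    smul_eq_zero_iff_right four_ne_zero, sub_eq_zero]

theorem IsSelfAdjoint.jordanMul [Ring A] [StarRing A] [Module ℝ A] [StarModule ℝ A] {a b : A}
    (ha : IsSelfAdjoint a) (hb : IsSelfAdjoint b) : IsSelfAdjoint (jordanMul a b) := by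
  refine .smul (.all _) ?_
  rw [IsSelfAdjoint, star_add, star_mul, star_mul, ha.star_eq, hb.star_eq, add_comm]

variable [NormedRing A] [StarRing A]

theorem subset_jordanClosure [Module ℝ A] (T : Set A) : T ⊆ jordanClosure T :=
  fun _ hx _ hD => hD.2 hx

theorem jordanClosure_subset [Module ℝ A] {T D : Set A} (hD : IsClosedJordanSubalgebra D)
    (hTD : T ⊆ D) : jordanClosure T ⊆ D :=
  Set.sInter_subset_of_mem ⟨hD, hTD⟩

theorem isClosedJordanSubalgebra_selfAdjoint_inter_centralizer [ContinuousStar A] [Algebra ℝ A]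
    [StarModule ℝ A] (W : Set A) :
    IsClosedJordanSubalgebra ({x | IsSelfAdjoint x} ∩ W.centralizer) := by
  refine ⟨(isClosed_eq continuous_star continuous_id).inter (Set.isClosed_centralizer W),
    fun a ha => ha.1, ⟨.zero _, Set.zero_mem_centralizer⟩, ?_, ?_, ?_⟩
  · rintro a ⟨ha, ha'⟩ b ⟨hb, hb'⟩
    exact ⟨ha.add hb, Set.add_mem_centralizer ha' hb'⟩
  · rintro r a ⟨ha, ha'⟩
    exact ⟨.smul (.all r) ha, Set.smul_mem_centralizer r ha'⟩
  · rintro a ⟨ha, ha'⟩ b ⟨hb, hb'⟩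
    exact ⟨ha.jordanMul hb, Set.smul_mem_centralizer _ <|
      Set.add_mem_centralizer (Set.mul_mem_centralizer ha' hb') (Set.mul_mem_centralizer hb' ha')⟩

theorem commute_of_mem_jordanClosure [ContinuousStar A] [Algebra ℝ A] [StarModule ℝ A]
    {T : Set A} (hsa : ∀ s ∈ T, IsSelfAdjoint s) (hT : ∀ s ∈ T, ∀ t ∈ T, Commute s t)
    {x y : A} (hx : x ∈ jordanClosure T) (hy : y ∈ jordanClosure T) : Commute x y := by
  have commutes_with_T : jordanClosure T ⊆ {x | IsSelfAdjoint x} ∩ T.centralizer :=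
    jordanClosure_subset (isClosedJordanSubalgebra_selfAdjoint_inter_centralizer T)
      fun s hs => ⟨hsa s hs, fun t ht => hT t ht s hs⟩
  have commutes_with_closure :
      jordanClosure T ⊆ {x | IsSelfAdjoint x} ∩ (jordanClosure T).centralizer :=
    jordanClosure_subset (isClosedJordanSubalgebra_selfAdjoint_inter_centralizer _)
      fun s hs => ⟨hsa s hs, fun w hw => ((commutes_with_T hw).2 s hs).symm⟩
  exact (commutes_with_closure hy).2 x hx

end Jordan

theorem jordanClosure_commutative_general
    {A : Type*} [NormedRing A] [StarRing A] [CStarRing A]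
    [NormedAlgebra ℂ A] [StarModule ℂ A]
    (S : Set A) (hsa : ∀ s ∈ S, IsSelfAdjoint s)
    (hcomm : ∀ s ∈ S, ∀ s' ∈ S, ∀ z ∈ jordanClosure {s, s'},
      jordanMul s (jordanMul s' z) = jordanMul s' (jordanMul s z)) :
    (∀ s ∈ S, ∀ s' ∈ S, s * s' = s' * s) ∧
    (∀ x ∈ jordanClosure S, ∀ y ∈ jordanClosure S, x * y = y * x) := by
  have pairwise_commute : ∀ s ∈ S, ∀ s' ∈ S, Commute s s' := fun s hs s' hs' =>
    have lie_commute {z} (hz : z ∈ ({s, s'} : Set A)) : Commute ⁅s, s'⁆ z :=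
      jordanMul_jordanMul_comm_iff.mp (hcomm s hs s' hs' z (subset_jordanClosure _ hz))
    commute_of_commute_lie (hsa s hs) (hsa s' hs') (lie_commute (by simp)) (lie_commute (by simp))
  exact ⟨fun s hs s' hs' => (pairwise_commute s hs s' hs').eq,
    fun x hx y hy => (commute_of_mem_jordanClosure hsa pairwise_commute hx hy).eq⟩

/-- If `S` is a nonempty set of self-adjoint elements of a C*-algebra `A` such that any
two elements `s, s'` of `S` operator commute within the closed Jordan subalgebra `JB(s,s')`
they generate, then all elements of `S` commute in `A`, and moreover any two elements of the
closed Jordan subalgebra generated by `S` commute in `A`. -/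
theorem jordanClosure_commutative
    {A : Type*} [NormedRing A] [StarRing A] [CStarRing A] [CompleteSpace A]
    [NormedAlgebra ℂ A] [StarModule ℂ A]
    (S : Set A) (hS : S.Nonempty) (hsa : ∀ s ∈ S, IsSelfAdjoint s)
    (hcomm : ∀ s ∈ S, ∀ s' ∈ S, ∀ z ∈ jordanClosure {s, s'},
      jordanMul s (jordanMul s' z) = jordanMul s' (jordanMul s z)) :
    (∀ s ∈ S, ∀ s' ∈ S, s * s' = s' * s) ∧
    (∀ x ∈ jordanClosure S, ∀ y ∈ jordanClosure S, x * y = y * x) :=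
  jordanClosure_commutative_general S hsa hcomm
end
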